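/- Let K ⊆ ℝ^n be a regular cone and let M̂ ∈ ℝ^{m×n} be a matrix each of whose rows belongs to the dual cone K_* (a packing conic set). Let b ∈ ℝ^m with b ≥ 0. Then there exists μ ∈ ℝ^m with μ ≥ 0 and M̂^Tμ ∈ int(K_*) if and only if the set R^≤(b) = {z ∈ K : M̂z ≤ b} is bounded. -/
import Mathlib


open Matrix

/-- A regular cone: closed, convex, a cone, pointed, and full-dimensional. -/
def IsRegularCone {k : ℕ} (C : Set (Fin k → ℝ)) : Prop :=
  IsClosed C ∧ Convex ℝ C ∧ (∀ x ∈ C, ∀ t : ℝ, 0 ≤ t → t • x ∈ C) ∧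
    C ∩ (-C) = {0} ∧ (interior C).Nonempty

/-- The dual cone of `K`. -/
def dualConeOf {k : ℕ} (K : Set (Fin k → ℝ)) : Set (Fin k → ℝ) :=
  {y | ∀ x ∈ K, 0 ≤ x ⬝ᵥ y}

/-- Crude bound on the dot product in terms of sup norms. -/
lemma abs_dot_le {k : ℕ} (x y : Fin k → ℝ) : |x ⬝ᵥ y| ≤ k * (‖x‖ * ‖y‖) := by
  calc |x ⬝ᵥ y| = |∑ i, x i * y i| := rfl
    _ ≤ ∑ i, |x i * y i| := Finset.abs_sum_le_sum_abs _ _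
    _ ≤ ∑ _i : Fin k, ‖x‖ * ‖y‖ := by
        refine Finset.sum_le_sum fun i _ => ?_
        rw [abs_mul]
        exact mul_le_mul (norm_le_pi_norm x i) (norm_le_pi_norm y i) (abs_nonneg _)
          (norm_nonneg _)
    _ = k * (‖x‖ * ‖y‖) := by simp [mul_comm]

/-- If every nonzero element of a closed cone `K` pairs strictly positively with `y`,
then `y` is in the interior of the dual cone. -/
lemma mem_interior_dualCone {k : ℕ} (K : Set (Fin k → ℝ)) (hcl : IsClosed K)
    (hcone : ∀ x ∈ K, ∀ t : ℝ, 0 ≤ t → t • x ∈ K)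
    (y : Fin k → ℝ) (hy : ∀ x ∈ K, x ≠ 0 → 0 < x ⬝ᵥ y) :
    y ∈ interior (dualConeOf K) := by
  -- key: scale any nonzero x ∈ K to the unit sphere
  have hscale : ∀ x ∈ K, x ≠ 0 → (‖x‖⁻¹ • x) ∈ K ∩ Metric.sphere 0 1 := by
    intro x hx hx0
    have hnx : (0:ℝ) < ‖x‖ := norm_pos_iff.mpr hx0
    refine ⟨hcone x hx _ (inv_nonneg.mpr hnx.le), ?_⟩
    rw [mem_sphere_zero_iff_norm, norm_smul, norm_inv, norm_norm]
    field_simp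
  by_cases hS : (K ∩ Metric.sphere 0 1).Nonempty
  · have hScomp : IsCompact (K ∩ Metric.sphere 0 1) :=
      Metric.isCompact_of_isClosed_isBounded (hcl.inter Metric.isClosed_sphere)
        (Metric.isBounded_sphere.subset Set.inter_subset_right)
    have hcont : Continuous fun x : Fin k → ℝ => x ⬝ᵥ y := by
      unfold dotProduct
      exact continuous_finset_sum _ fun i _ => (continuous_apply i).mul continuous_const
    obtain ⟨x₀, hx₀, hmin⟩ := hScomp.exists_isMinOn hS hcont.continuousOn
    set δ := x₀ ⬝ᵥ y with hδdef
    have hx₀ne : x₀ ≠ 0 := by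
      intro h
      have := hx₀.2
      rw [mem_sphere_zero_iff_norm, h] at this
      simp at this
    have hδpos : 0 < δ := hy x₀ hx₀.1 hx₀ne
    -- show the ball of radius δ/(k+1) around y lies in the dual cone
    refine mem_interior_iff_mem_nhds.mpr (Metric.mem_nhds_iff.mpr
      ⟨δ / (k + 1), by positivity, ?_⟩)
    intro y' hy' x hx
    by_cases hx0 : x = 0
    · simp [hx0, dotProduct]
    · obtain ⟨hx'K, hx's⟩ := hscale x hx hx0
      set x' := ‖x‖⁻¹ • x with hx'def
      have hx'n : ‖x'‖ = 1 := mem_sphere_zero_iff_norm.mp hx's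
      have h1 : δ ≤ x' ⬝ᵥ y := hmin ⟨hx'K, hx's⟩
      have h2 : |x' ⬝ᵥ (y' - y)| ≤ k * ‖y' - y‖ := by
        have := abs_dot_le x' (y' - y)
        rwa [hx'n, one_mul] at this
      have h3 : ‖y' - y‖ < δ / (k + 1) := by
        rw [← dist_eq_norm]
        exact hy'
      have h4 : (k : ℝ) * ‖y' - y‖ ≤ k * (δ / (k + 1)) :=
        mul_le_mul_of_nonneg_left h3.le (Nat.cast_nonneg k)
      have h5 : 0 < x' ⬝ᵥ y' := by
        have : x' ⬝ᵥ y' = x' ⬝ᵥ y + x' ⬝ᵥ (y' - y) := by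
          rw [← dotProduct_add]; ring_nf
        rw [this]
        have hlb : -(k * (δ / (k + 1))) ≤ x' ⬝ᵥ (y' - y) := by
          have := neg_abs_le (x' ⬝ᵥ (y' - y))
          linarith [h2, h4]
        have hkey : (0:ℝ) < δ - k * (δ / (k + 1)) := by
          have hk1 : (0:ℝ) < (k:ℝ) + 1 := by positivity
          rw [sub_pos]
          rw [div_eq_mul_inv, ← mul_assoc]
          rw [show (k:ℝ) * δ * ((k:ℝ)+1)⁻¹ = δ * ((k:ℝ) * ((k:ℝ)+1)⁻¹) by ring]
          have : (k:ℝ) * ((k:ℝ)+1)⁻¹ < 1 := by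
            rw [mul_inv_lt_iff₀ hk1]; linarith
          nlinarith
        linarith
      -- scale back
      have : x ⬝ᵥ y' = ‖x‖ * (x' ⬝ᵥ y') := by
        rw [hx'def, smul_dotProduct, smul_eq_mul, ← mul_assoc,
          mul_inv_cancel₀ (norm_ne_zero_iff.mpr hx0), one_mul]
      rw [this]
      positivity
  · -- K ⊆ {0}, so the dual cone is everything
    have hK0 : ∀ x ∈ K, x = 0 := by
      intro x hx
      by_contra hx0
      exact hS ⟨_, hscale x hx hx0⟩
    have : dualConeOf K = Set.univ := by
      ext y'
      simp only [Set.mem_univ, iff_true, dualConeOf, Set.mem_setOf_eq]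
      intro x hx
      rw [hK0 x hx]
      simp [dotProduct]
    rw [this]
    simp

/-- Boundedness characterization for packing conic sets: `{z ∈ K : M̂z ≤ b}` is bounded
iff there is `μ ≥ 0` with `M̂ᵀμ` in the interior of the dual cone. -/
theorem packing_bounded_iff {n m : ℕ}
    (K : Set (Fin n → ℝ)) (hK : IsRegularCone K)
    (Mhat : Matrix (Fin m) (Fin n) ℝ)
    (hrows : ∀ i : Fin m, (fun j => Mhat i j) ∈ dualConeOf K)
    (b : Fin m → ℝ) (hb : ∀ i, 0 ≤ b i) :
    (∃ μ : Fin m → ℝ, (∀ i, 0 ≤ μ i) ∧ Mhatᵀ.mulVec μ ∈ interior (dualConeOf K)) ↔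
      Bornology.IsBounded {z ∈ K | ∀ i, Mhat.mulVec z i ≤ b i} := by
  obtain ⟨hcl, hconv, hcone, hpt, hfull⟩ := hK
  constructor
  · rintro ⟨μ, hμ, hint⟩
    set y := Mhatᵀ.mulVec μ with hydef
    obtain ⟨ε, hε, hball⟩ := Metric.mem_nhds_iff.mp (mem_interior_iff_mem_nhds.mp hint)
    rw [isBounded_iff_forall_norm_le]
    refine ⟨2 * (μ ⬝ᵥ b) / ε, ?_⟩
    rintro z ⟨hzK, hzle⟩
    -- sign vector
    set u : Fin n → ℝ := fun j => if 0 ≤ z j then 1 else -1 with hudef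
    have hun : ‖u‖ ≤ 1 := by
      rw [pi_norm_le_iff_of_nonneg zero_le_one]
      intro i
      rw [hudef]
      by_cases h : 0 ≤ z i <;> simp [h]
    have hzu : ‖z‖ ≤ z ⬝ᵥ u := by
      have hz_sum : z ⬝ᵥ u = ∑ j, |z j| := by
        refine Finset.sum_congr rfl fun j _ => ?_
        rw [hudef]
        by_cases h : 0 ≤ z j
        · simp [h, abs_of_nonneg h]
        · push_neg at h
          simp [h.not_ge, abs_of_neg h]
      rw [hz_sum]
      rw [pi_norm_le_iff_of_nonneg (Finset.sum_nonneg fun j _ => abs_nonneg _)]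
      intro i
      exact Finset.single_le_sum (fun j _ => abs_nonneg (z j)) (Finset.mem_univ i)
    -- y - (ε/2) • u is in the ball, hence in the dual cone
    have hmem : y - (ε / 2) • u ∈ dualConeOf K := by
      apply hball
      rw [Metric.mem_ball, dist_eq_norm]
      have : y - (ε / 2) • u - y = -((ε / 2) • u) := by ring_nf
      rw [this, norm_neg, norm_smul, Real.norm_eq_abs, abs_of_pos (by linarith)]
      calc ε / 2 * ‖u‖ ≤ ε / 2 * 1 := by
            exact mul_le_mul_of_nonneg_left hun (by linarith)
        _ < ε := by linarith
    have h0 : 0 ≤ z ⬝ᵥ (y - (ε / 2) • u) := hmem z hzK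
    rw [dotProduct_sub, dotProduct_smul, smul_eq_mul] at h0
    -- z ⬝ᵥ y ≤ μ ⬝ᵥ b
    have hzy : z ⬝ᵥ y = μ ⬝ᵥ Mhat.mulVec z := by
      rw [hydef, mulVec_transpose, dotProduct_comm, dotProduct_mulVec]
    have hub : z ⬝ᵥ y ≤ μ ⬝ᵥ b := by
      rw [hzy]
      exact Finset.sum_le_sum fun i _ =>
        mul_le_mul_of_nonneg_left (hzle i) (hμ i)
    have hεz : ε / 2 * ‖z‖ ≤ μ ⬝ᵥ b := by
      have : ε / 2 * ‖z‖ ≤ ε / 2 * (z ⬝ᵥ u) :=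
        mul_le_mul_of_nonneg_left hzu (by linarith)
      linarith
    rw [le_div_iff₀ hε]
    nlinarith [hεz]
  · intro hbdd
    refine ⟨fun _ => 1, fun i => zero_le_one, ?_⟩
    set y := Mhatᵀ.mulVec (fun _ => 1) with hydef
    apply mem_interior_dualCone K hcl hcone
    intro x hx hx0
    have hxy : x ⬝ᵥ y = ∑ i, Mhat.mulVec x i := by
      rw [hydef]
      simp only [dotProduct, Matrix.mulVec, Matrix.transpose_apply, Finset.mul_sum]
      rw [Finset.sum_comm]
      exact Finset.sum_congr rfl fun i _ => Finset.sum_congr rfl fun j _ => by ring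
    have hterm : ∀ i, 0 ≤ Mhat.mulVec x i := by
      intro i
      have := hrows i x hx
      rwa [dotProduct_comm] at this
    have hnnsum : 0 ≤ x ⬝ᵥ y := by
      rw [hxy]; exact Finset.sum_nonneg fun i _ => hterm i
    rcases hnnsum.lt_or_eq with h | h
    · exact h
    -- x ⬝ᵥ y = 0 forces Mhat.mulVec x = 0, contradicting boundedness
    exfalso
    have hzero : ∀ i, Mhat.mulVec x i = 0 := by
      have := (Finset.sum_eq_zero_iff_of_nonneg fun i _ => hterm i).mp (by rw [← hxy, ← h])
      intro i; exact this i (Finset.mem_univ i)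
    obtain ⟨C, hC⟩ := isBounded_iff_forall_norm_le.mp hbdd
    have hnx : (0:ℝ) < ‖x‖ := norm_pos_iff.mpr hx0
    set t : ℝ := (|C| + 1) / ‖x‖ with htdef
    have ht : 0 ≤ t := by positivity
    have htx : t • x ∈ {z ∈ K | ∀ i, Mhat.mulVec z i ≤ b i} := by
      refine ⟨hcone x hx t ht, fun i => ?_⟩
      rw [mulVec_smul, Pi.smul_apply, hzero i, smul_zero]
      exact hb i
    have := hC _ htx
    rw [norm_smul, Real.norm_eq_abs, abs_of_nonneg ht, htdef,
      div_mul_cancel₀ _ hnx.ne'] at this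
    have : C ≤ |C| := le_abs_self C
    linarith [le_abs_self C, hC _ htx]
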